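/- Let r ≥ 3 be an odd integer and let n be an even integer with n ≥ 2r. Then f_r(n) ≤ 2·f_r(n/2) + 2·f_1(n/2)·f_{r−1}(n/2) + 2·f_2(n/2)·f_{r−2}(n/2) + ⋯ + 2·f_{(r−1)/2}(n/2)·f_{(r+1)/2}(n/2), i.e., f_r(n) ≤ 2·∑_{i=0}^{(r−1)/2} f_i(n/2)·f_{r−i}(n/2), where by convention f_0(n/2) = f_1(n/2) = 1. -/

import Mathlib

/-- A complete `r`-partite `r`-graph (a "block") on a finite vertex set `V ⊆ ℕ`:
it is determined by `r` pairwise disjoint nonempty subsets of `V`. -/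
structure Block (V : Finset ℕ) (r : ℕ) where
  parts : Fin r → Finset ℕ
  nonempty : ∀ i, (parts i).Nonempty
  subset : ∀ i, parts i ⊆ V
  disj : ∀ i j, i ≠ j → Disjoint (parts i) (parts j)

/-- The edge set of a block: all sets contained in the union of the parts
meeting each part in exactly one vertex. -/
def Block.edges {V : Finset ℕ} {r : ℕ} (B : Block V r) : Set (Finset ℕ) :=
  {X | (∀ i, (X ∩ B.parts i).card = 1) ∧ ∀ x ∈ X, ∃ i, x ∈ B.parts i}

/-- `ExactCover V r k F` : there are `k` complete `r`-partite `r`-graphs on `V`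
whose edge sets are pairwise disjoint and whose union is the family `F`. -/
def ExactCover (V : Finset ℕ) (r k : ℕ) (F : Set (Finset ℕ)) : Prop :=
  ∃ B : Fin k → Block V r,
    (∀ i j, i ≠ j → Disjoint (B i).edges (B j).edges) ∧
    (⋃ i, (B i).edges) = F

/-- `f r n` : the minimum number of complete `r`-partite `r`-graphs needed to
partition the edge set of the complete `r`-uniform hypergraph on `[n]`. -/
noncomputable def f (r n : ℕ) : ℕ :=
  sInf {k | ExactCover (Finset.range n) r k
    {X | X ⊆ Finset.range n ∧ X.card = r}}

/-!
Split `range (m₁ + m₂)` into `A = range m₁` and a shifted copy `B` of `range m₂`. An `r`-set `X`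
meets `A` in some `i` and `B` in `r - i` vertices. Gluing each block of an optimal partition of the
`i`-subsets of `A` with each block of an optimal partition of the `(r - i)`-subsets of `B` gives
`f i m₁ * f (r - i) m₂` blocks partitioning exactly these `X`, so
`f r (m₁ + m₂) ≤ ∑ i, f i m₁ * f (r - i) m₂`. For `m₁ = m₂` the summand is invariant under
`i ↦ r - i`, which has no fixed point when `r` is odd; pairing the terms gives the factor `2`.
-/

open Finset Function

theorem Finset.coe_powersetCard {α : Type*} (s : Finset α) (r : ℕ) :
    (s.powersetCard r : Set (Finset α)) = {X | X ⊆ s ∧ X.card = r} :=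
  Set.ext fun _ => mem_powersetCard

lemma Finset.card_inter_singleton_eq_one_iff {α : Type*} [DecidableEq α] {s : Finset α} {a : α} :
    (s ∩ {a}).card = 1 ↔ a ∈ s := by
  by_cases h : a ∈ s <;> simp [h]

namespace Block

variable {V : Finset ℕ} {r : ℕ}

def ofFinset {X : Finset ℕ} (hXV : X ⊆ V) (hX : X.card = r) : Block V r where
  parts i := {X.orderEmbOfFin hX i}
  nonempty _ := singleton_nonempty _
  subset i := singleton_subset_iff.mpr (hXV (X.orderEmbOfFin_mem hX i))
  disj _ _ hij := disjoint_singleton.mpr ((X.orderEmbOfFin hX).injective.ne hij)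

lemma edges_ofFinset {X : Finset ℕ} (hXV : X ⊆ V) (hX : X.card = r) :
    (ofFinset hXV hX).edges = {X} := by
  have hmem : ∀ x, x ∈ X ↔ ∃ i, X.orderEmbOfFin hX i = x := fun x => by
    rw [← Set.mem_range, range_orderEmbOfFin, mem_coe]
  ext Y
  simp only [edges, ofFinset, card_inter_singleton_eq_one_iff, mem_singleton,
    Set.mem_ofPred_eq, Set.mem_singleton_iff]
  constructor
  · rintro ⟨hXY, hYX⟩
    refine Subset.antisymm (fun y hy => ?_) fun x hx => ?_
    · obtain ⟨i, rfl⟩ := hYX y hy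
      exact X.orderEmbOfFin_mem hX i
    · obtain ⟨i, rfl⟩ := (hmem x).mp hx
      exact hXY i
  · rintro rfl
    exact ⟨fun i => orderEmbOfFin_mem _ hX i, fun x hx => ((hmem x).mp hx).imp fun _ => Eq.symm⟩

def map (e : ℕ ↪ ℕ) (B : Block V r) : Block (V.map e) r where
  parts i := (B.parts i).map e
  nonempty i := (B.nonempty i).map
  subset i := map_subset_map.mpr (B.subset i)
  disj i j hij := (disjoint_map e).mpr (B.disj i j hij)

lemma map_mem_edges_map_iff (e : ℕ ↪ ℕ) (B : Block V r) {X : Finset ℕ} :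
    X.map e ∈ (B.map e).edges ↔ X ∈ B.edges := by
  simp only [edges, map, Set.mem_ofPred_eq, ← map_inter, card_map, forall_mem_map, mem_map']

lemma edges_map (e : ℕ ↪ ℕ) (B : Block V r) : (B.map e).edges = Finset.map e '' B.edges := by
  ext X
  constructor
  · intro hX
    obtain ⟨X₀, -, rfl⟩ : ∃ X₀ ⊆ V, X = X₀.map e := subset_map_iff.mp fun x hx => by
      obtain ⟨i, hi⟩ := hX.2 x hx
      exact (B.map e).subset i hi
    exact ⟨X₀, (map_mem_edges_map_iff e B).mp hX, rfl⟩
  · rintro ⟨X₀, hX₀, rfl⟩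
    exact (map_mem_edges_map_iff e B).mpr hX₀

def append {A B : Finset ℕ} {a b : ℕ} (hAB : Disjoint A B) (Ba : Block A a) (Bb : Block B b) :
    Block (A ∪ B) (a + b) where
  parts := Fin.append Ba.parts Bb.parts
  nonempty := (Fin.forall_fin_add _).mpr ⟨by simpa using Ba.nonempty, by simpa using Bb.nonempty⟩
  subset := (Fin.forall_fin_add _).mpr
    ⟨fun i => by simpa using (Ba.subset i).trans subset_union_left,
     fun j => by simpa using (Bb.subset j).trans subset_union_right⟩
  disj i j hij := by
    cases i using Fin.addCases <;> cases j using Fin.addCases <;>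
      simp only [Fin.append_left, Fin.append_right]
    · exact Ba.disj _ _ fun h => hij (by rw [h])
    · exact hAB.mono (Ba.subset _) (Bb.subset _)
    · exact (hAB.mono (Ba.subset _) (Bb.subset _)).symm
    · exact Bb.disj _ _ fun h => hij (by rw [h])

lemma exists_mem_parts_append {A B : Finset ℕ} {a b : ℕ} (hAB : Disjoint A B) (Ba : Block A a)
    (Bb : Block B b) (x : ℕ) :
    (∃ i, x ∈ (Ba.append hAB Bb).parts i) ↔ (∃ i, x ∈ Ba.parts i) ∨ ∃ j, x ∈ Bb.parts j := by
  constructor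
  · rintro ⟨i, hi⟩
    cases i using Fin.addCases <;> simp only [append, Fin.append_left, Fin.append_right] at hi
    exacts [Or.inl ⟨_, hi⟩, Or.inr ⟨_, hi⟩]
  · rintro (⟨i, hi⟩ | ⟨j, hj⟩)
    exacts [⟨Fin.castAdd b i, by simpa [append] using hi⟩,
      ⟨Fin.natAdd a j, by simpa [append] using hj⟩]

lemma edges_append {A B : Finset ℕ} {a b : ℕ} (hAB : Disjoint A B) (Ba : Block A a)
    (Bb : Block B b) :
    (Ba.append hAB Bb).edges = {X | X ⊆ A ∪ B ∧ X ∩ A ∈ Ba.edges ∧ X ∩ B ∈ Bb.edges} := by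
  have hA (X : Finset ℕ) (i : Fin a) : X ∩ A ∩ Ba.parts i = X ∩ Ba.parts i := by
    rw [inter_assoc, inter_eq_right.mpr (Ba.subset i)]
  have hB (X : Finset ℕ) (j : Fin b) : X ∩ B ∩ Bb.parts j = X ∩ Bb.parts j := by
    rw [inter_assoc, inter_eq_right.mpr (Bb.subset j)]
  ext X
  simp only [edges, Set.mem_ofPred_eq, exists_mem_parts_append, hA, hB, mem_inter, and_imp]
  simp only [append, Fin.forall_fin_add, Fin.append_left, Fin.append_right]
  have hcover : (∀ x ∈ X, (∃ i, x ∈ Ba.parts i) ∨ ∃ j, x ∈ Bb.parts j) ↔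
      X ⊆ A ∪ B ∧ (∀ x ∈ X, x ∈ A → ∃ i, x ∈ Ba.parts i) ∧
        ∀ x ∈ X, x ∈ B → ∃ j, x ∈ Bb.parts j := by
    constructor
    · intro h
      refine ⟨fun x hx => ?_, fun x hx hxA => ?_, fun x hx hxB => ?_⟩ <;>
        rcases h x hx with ⟨i, hi⟩ | ⟨j, hj⟩
      · exact mem_union_left _ (Ba.subset i hi)
      · exact mem_union_right _ (Bb.subset j hj)
      · exact ⟨i, hi⟩
      · exact absurd (Bb.subset j hj) (disjoint_left.mp hAB hxA)
      · exact absurd (Ba.subset i hi) (disjoint_right.mp hAB hxB)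
      · exact ⟨j, hj⟩
    · rintro ⟨hsub, hcoverA, hcoverB⟩ x hx
      rcases mem_union.mp (hsub hx) with hxA | hxB
      exacts [Or.inl (hcoverA x hx hxA), Or.inr (hcoverB x hx hxB)]
  rw [hcover]
  tauto

end Block

namespace ExactCover

variable {V : Finset ℕ} {r : ℕ}

lemma of_fintype {ι : Type*} [Fintype ι] {F : Set (Finset ℕ)} (B : ι → Block V r)
    (hdisj : Pairwise (Disjoint on fun i => (B i).edges)) (hcover : ⋃ i, (B i).edges = F) :
    ExactCover V r (Fintype.card ι) F :=
  let e := (Fintype.equivFin ι).symm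
  ⟨fun k => B (e k), fun _ _ hij => hdisj (e.injective.ne hij),
    hcover ▸ e.surjective.iUnion_comp fun i => (B i).edges⟩

lemma powersetCard (V : Finset ℕ) (r : ℕ) :
    ExactCover V r (V.powersetCard r).card (V.powersetCard r) := by
  have hdisj : Pairwise (Disjoint on fun X : V.powersetCard r =>
      (Block.ofFinset (mem_powersetCard.mp X.2).1 (mem_powersetCard.mp X.2).2).edges) :=
    fun X Y hXY => by
      simpa only [onFun, Block.edges_ofFinset, Set.disjoint_singleton] using
        Subtype.coe_injective.ne hXY
  have hcover : ⋃ X : V.powersetCard r,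
      (Block.ofFinset (mem_powersetCard.mp X.2).1 (mem_powersetCard.mp X.2).2).edges =
        V.powersetCard r := by
    ext X
    simp [Block.edges_ofFinset]
  simpa using of_fintype _ hdisj hcover

lemma map (e : ℕ ↪ ℕ) {k : ℕ} {F : Set (Finset ℕ)} (h : ExactCover V r k F) :
    ExactCover (V.map e) r k (Finset.map e '' F) := by
  obtain ⟨B, hdisj, hcover⟩ := h
  refine ⟨fun i => (B i).map e, fun i j hij => ?_, ?_⟩
  · simp only [Block.edges_map]
    exact (Set.disjoint_image_iff (map_injective e)).mpr (hdisj i j hij)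
  · simp only [Block.edges_map, ← Set.image_iUnion, hcover]

lemma append {A B : Finset ℕ} {a b ka kb : ℕ} {Fa Fb : Set (Finset ℕ)} (hAB : Disjoint A B)
    (ha : ExactCover A a ka Fa) (hb : ExactCover B b kb Fb) :
    ExactCover (A ∪ B) (a + b) (ka * kb) {X | X ⊆ A ∪ B ∧ X ∩ A ∈ Fa ∧ X ∩ B ∈ Fb} := by
  obtain ⟨Ba, hdisja, hcovera⟩ := ha
  obtain ⟨Bb, hdisjb, hcoverb⟩ := hb
  have hdisj : Pairwise (Disjoint on fun p : Fin ka × Fin kb =>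
      ((Ba p.1).append hAB (Bb p.2)).edges) := by
    rintro ⟨i, j⟩ ⟨i', j'⟩ hne
    simp only [onFun, Block.edges_append, Set.disjoint_left]
    rintro X ⟨-, hXa, hXb⟩ ⟨-, hXa', hXb'⟩
    by_cases hi : i = i'
    · subst hi
      exact Set.disjoint_left.mp (hdisjb j j' fun h => hne (by rw [h])) hXb hXb'
    · exact Set.disjoint_left.mp (hdisja i i' hi) hXa hXa'
  have hcover : ⋃ p : Fin ka × Fin kb, ((Ba p.1).append hAB (Bb p.2)).edges =
      {X | X ⊆ A ∪ B ∧ X ∩ A ∈ Fa ∧ X ∩ B ∈ Fb} := by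
    ext X
    simp only [Set.mem_iUnion, Block.edges_append, Set.mem_ofPred_eq, Prod.exists, ← hcovera,
      ← hcoverb]
    exact ⟨fun ⟨i, j, hX, hXa, hXb⟩ => ⟨hX, ⟨i, hXa⟩, ⟨j, hXb⟩⟩,
      fun ⟨hX, ⟨i, hXa⟩, ⟨j, hXb⟩⟩ => ⟨i, j, hX, hXa, hXb⟩⟩
  simpa using of_fintype _ hdisj hcover

lemma biUnion {ι : Type*} (s : Finset ι) {k : ι → ℕ} {F : ι → Set (Finset ℕ)}
    (hdisj : (s : Set ι).PairwiseDisjoint F) (h : ∀ i ∈ s, ExactCover V r (k i) (F i)) :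
    ExactCover V r (∑ i ∈ s, k i) (⋃ i ∈ s, F i) := by
  choose B hBdisj hBcover using h
  have hsub (i : s) (j : Fin (k i)) : (B i i.2 j).edges ⊆ F i :=
    hBcover i i.2 ▸ Set.subset_iUnion (fun j => (B i i.2 j).edges) j
  have hdisj' : Pairwise (Disjoint on fun p : Σ i : s, Fin (k i) => (B p.1 p.1.2 p.2).edges) := by
    rintro ⟨i, j⟩ ⟨i', j'⟩ hne
    by_cases hi : i = i'
    · subst hi
      exact hBdisj i i.2 j j' fun h => hne (by rw [h])
    · exact (hdisj i.2 i'.2 (Subtype.coe_injective.ne hi)).mono (hsub i j) (hsub i' j')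
  have hcover : ⋃ p : Σ i : s, Fin (k i), (B p.1 p.1.2 p.2).edges = ⋃ i ∈ s, F i := by
    rw [Set.iUnion_sigma, ← set_biUnion_coe, Set.biUnion_eq_iUnion]
    exact Set.iUnion_congr fun i => hBcover i i.2
  simpa only [Fintype.card_sigma, Fintype.card_fin, sum_coe_sort s k] using
    of_fintype _ hdisj' hcover

end ExactCover

lemma f_le_of_exactCover {r n k : ℕ}
    (h : ExactCover (range n) r k ((range n).powersetCard r)) : f r n ≤ k :=
  Nat.sInf_le (by rwa [coe_powersetCard] at h)

lemma exactCover_f (r n : ℕ) : ExactCover (range n) r (f r n) ((range n).powersetCard r) := by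
  have h := ExactCover.powersetCard (range n) r
  rw [coe_powersetCard] at h ⊢
  exact Nat.sInf_mem (s := {k | ExactCover (range n) r k {X | X ⊆ range n ∧ #X = r}}) ⟨_, h⟩

theorem f_add_le (r m₁ m₂ : ℕ) :
    f r (m₁ + m₂) ≤ ∑ p ∈ antidiagonal r, f p.1 m₁ * f p.2 m₂ := by
  set A := range m₁
  set B := (range m₂).map (addLeftEmbedding m₁)
  have hAB : Disjoint A B := disjoint_range_addLeftEmbedding m₁ _
  have hcard {X : Finset ℕ} (hX : X ⊆ A ∪ B) : #(X ∩ A) + #(X ∩ B) = #X := by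
    rw [← card_union_of_disjoint (hAB.mono inter_subset_right inter_subset_right),
      ← inter_union_distrib_left, inter_eq_left.mpr hX]
  set F : ℕ × ℕ → Set (Finset ℕ) := fun p => {X | X ⊆ A ∪ B ∧ #(X ∩ A) = p.1 ∧ #(X ∩ B) = p.2}
  have hF : ∀ p ∈ antidiagonal r, ExactCover (A ∪ B) r (f p.1 m₁ * f p.2 m₂) (F p) := by
    intro p hp
    have hB : ExactCover B p.2 (f p.2 m₂) (B.powersetCard p.2) := by
      rw [powersetCard_map, coe_map]
      exact (exactCover_f p.2 m₂).map _
    have h := (exactCover_f p.1 m₁).append hAB hB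
    rw [HasAntidiagonal.mem_antidiagonal.mp hp] at h
    convert h using 2 with X
    simp [A, mem_powersetCard]
  apply f_le_of_exactCover
  rw [range_add]
  convert ExactCover.biUnion _ (fun p _ q _ hpq => ?_) hF
  · ext X
    simp only [F, coe_powersetCard, Set.mem_ofPred_eq, Set.mem_iUnion,
      HasAntidiagonal.mem_antidiagonal, exists_prop]
    constructor
    · rintro ⟨hX, rfl⟩
      exact ⟨(#(X ∩ A), #(X ∩ B)), hcard hX, hX, rfl, rfl⟩
    · rintro ⟨p, hp, hX, hpA, hpB⟩
      exact ⟨hX, by rw [← hcard hX, hpA, hpB, hp]⟩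
  · refine Set.disjoint_left.mpr fun X hXp hXq => hpq ?_
    exact Prod.ext (hXp.2.1.symm.trans hXq.2.1) (hXp.2.2.symm.trans hXq.2.2)

theorem Finset.sum_range_two_mul_of_reflect {M : Type*} [AddCommMonoid M] (g : ℕ → M) (s : ℕ)
    (hg : ∀ i < s, g (2 * s - 1 - i) = g i) :
    ∑ i ∈ range (2 * s), g i = 2 • ∑ i ∈ range s, g i := by
  have hupper : ∑ i ∈ range s, g (s + i) = ∑ i ∈ range s, g i := by
    rw [← sum_range_reflect]
    refine sum_congr rfl fun i hi => ?_
    rw [← hg i (mem_range.mp hi)]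
    have hi : i < s := mem_range.mp hi
    congr 1
    omega
  rw [two_mul, sum_range_add, hupper, two_nsmul]

theorem f_odd_recurrence_general (r n : ℕ) (hro : Odd r) (hne : Even n) :
    f r n ≤ 2 * (∑ i ∈ Finset.range ((r - 1) / 2 + 1), f i (n / 2) * f (r - i) (n / 2)) := by
  obtain ⟨t, rfl⟩ : ∃ t, r = 2 * t + 1 := hro
  obtain ⟨m, rfl⟩ := hne
  have ht : (2 * t + 1 - 1) / 2 = t := by omega
  have hm : (m + m) / 2 = m := by omega
  rw [ht, hm]
  calc f (2 * t + 1) (m + m) ≤ ∑ p ∈ antidiagonal (2 * t + 1), f p.1 m * f p.2 m := f_add_le _ _ _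
    _ = ∑ i ∈ range (2 * (t + 1)), f i m * f (2 * t + 1 - i) m :=
      Nat.sum_antidiagonal_eq_sum_range_succ (fun i j => f i m * f j m) _
    _ = 2 • ∑ i ∈ range (t + 1), f i m * f (2 * t + 1 - i) m :=
      sum_range_two_mul_of_reflect _ _ fun i hi => by
        rw [mul_comm]
        congr 2
        omega
    _ = _ := smul_eq_mul _ _

theorem f_odd_recurrence (r n : ℕ) (hr : 3 ≤ r) (hro : Odd r) (hne : Even n) (hn : 2 * r ≤ n) :
    f r n ≤ 2 * (∑ i ∈ Finset.range ((r - 1) / 2 + 1), f i (n / 2) * f (r - i) (n / 2)) :=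
  f_odd_recurrence_general r n hro hne
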